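/- Every smooth lattice polygon with exactly 5 or exactly 6 vertices has at least one interior lattice point; that is, if P ⊂ ℝ² is a smooth full-dimensional lattice polytope with 5 or 6 vertices, then the topological interior of P contains a point of ℤ². -/

import Mathlib

open Set

/-- Interpret an integer vector as a real vector. -/
def ofInt {d : ℕ} (z : Fin d → ℤ) : Fin d → ℝ := fun i => (z i : ℝ)

/-- A lattice polytope: convex hull of a finite set of integer points. -/
def IsLatticePolytope {d : ℕ} (P : Set (Fin d → ℝ)) : Prop :=
  ∃ V : Finset (Fin d → ℤ), P = convexHull ℝ (ofInt '' (V : Set (Fin d → ℤ)))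

/-- Two vertices are adjacent if the segment between them is an edge
(an extreme subset) of the polytope. -/
def Adjacent {d : ℕ} (P : Set (Fin d → ℝ)) (v w : Fin d → ℝ) : Prop :=
  v ∈ Set.extremePoints ℝ P ∧ w ∈ Set.extremePoints ℝ P ∧ v ≠ w ∧
    IsExtreme ℝ P (segment ℝ v w)

/-- A polytope is simple if every vertex has exactly `d` neighbours. -/
def IsSimplePolytope {d : ℕ} (P : Set (Fin d → ℝ)) : Prop :=
  ∀ v ∈ Set.extremePoints ℝ P, {w | Adjacent P v w}.ncard = d

/-- A smooth (full-dimensional) lattice polytope: a simple full-dimensional lattice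
polytope such that at each vertex the primitive edge directions form a ℤ-basis of ℤ^d. -/
def IsSmoothPolytope {d : ℕ} (P : Set (Fin d → ℝ)) : Prop :=
  IsLatticePolytope P ∧ affineSpan ℝ P = ⊤ ∧ IsSimplePolytope P ∧
    ∀ v ∈ Set.extremePoints ℝ P, ∃ b : Module.Basis (Fin d) ℤ (Fin d → ℤ),
      (∀ w, Adjacent P v w → ∃ i : Fin d, ∃ c : ℤ, 0 < c ∧ w = v + c • ofInt (b i)) ∧
      (∀ i : Fin d, ∃ w, Adjacent P v w ∧ ∃ c : ℤ, 0 < c ∧ w = v + c • ofInt (b i))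

/-- The lattice points of `P`. -/
def latticePts {d : ℕ} (P : Set (Fin d → ℝ)) : Set (Fin d → ℝ) :=
  {x ∈ P | ∃ z : Fin d → ℤ, x = ofInt z}

/-- Unimodular equivalence: `Q` is the image of `P` under `x ↦ Mx + t`
with `M ∈ GL_d(ℤ)` and `t ∈ ℤ^d`. -/
def UnimodEquiv {d : ℕ} (P Q : Set (Fin d → ℝ)) : Prop :=
  ∃ M : Matrix (Fin d) (Fin d) ℤ, IsUnit M.det ∧ ∃ t : Fin d → ℤ,
    Q = (fun x => (M.map ((↑) : ℤ → ℝ)).mulVec x + ofInt t) '' P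

/-!
Let `v` be a vertex, with primitive edge vectors `b₀, b₁` forming a lattice basis. Since the two
segments at `v` are edges, `P` lies in the cone `v + ℝ≥0 b₀ + ℝ≥0 b₁`. If the lattice point
`v + b₀ + b₁` is not interior, a supporting line through it gives weights `a, a' ≥ 0`, not both
zero, with `a x + a' y ≤ a + a'` on `P`, in the coordinates `(x, y)` of this basis. The vertices of
`P` are then lattice points of this region, and no vertex lies between two others. For `a ≤ a'`
the region meets only the rows `y = 0, 1`, each holding at most two vertices, plus the point
`(0, 2)` when `a = a'`, in which case the region is the triangle `x + y ≤ 2` and a check of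
midpoints leaves room for at most four vertices.
-/

section ofInt

variable {d : ℕ}

@[simp] lemma ofInt_apply (z : Fin d → ℤ) (i : Fin d) : ofInt z i = z i := rfl

lemma ofInt_injective : Function.Injective (ofInt (d := d)) :=
  fun _ _ h => funext fun i => by simpa using congrFun h i

@[simp] lemma ofInt_add (z w : Fin d → ℤ) : ofInt (z + w) = ofInt z + ofInt w := by
  ext; simp

@[simp] lemma ofInt_sub (z w : Fin d → ℤ) : ofInt (z - w) = ofInt z - ofInt w := by
  ext; simp

@[simp] lemma ofInt_zsmul (c : ℤ) (z : Fin d → ℤ) : ofInt (c • z) = (c : ℝ) • ofInt z := by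
  ext; simp

lemma ofInt_sum {ι : Type*} (s : Finset ι) (f : ι → Fin d → ℤ) :
    ofInt (∑ i ∈ s, f i) = ∑ i ∈ s, ofInt (f i) := by
  ext; simp

end ofInt

namespace Module.Basis

variable {d : ℕ} (b : Basis (Fin d) ℤ (Fin d → ℤ))

lemma top_le_span_ofInt : ⊤ ≤ Submodule.span ℝ (range (ofInt ∘ b)) := by
  rintro x -
  have hx : x = ∑ j, x j • ofInt (Pi.single j 1) := by ext; simp [Pi.single_apply]
  rw [hx]
  refine Submodule.sum_mem _ fun j _ => Submodule.smul_mem _ _ ?_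
  rw [← b.sum_repr (Pi.single j 1), ofInt_sum]
  exact Submodule.sum_mem _ fun i _ => by
    rw [ofInt_zsmul]; exact Submodule.smul_mem _ _ (Submodule.subset_span ⟨i, rfl⟩)

noncomputable def toReal : Basis (Fin d) ℝ (Fin d → ℝ) :=
  basisOfTopLeSpanOfCardEqFinrank (ofInt ∘ b) b.top_le_span_ofInt (by simp)

@[simp] lemma toReal_apply (i : Fin d) : b.toReal i = ofInt (b i) := by
  simp [toReal]

@[simp] lemma toReal_repr_ofInt (z : Fin d → ℤ) (i : Fin d) :
    b.toReal.repr (ofInt z) i = b.repr z i := by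
  conv_lhs => rw [← b.sum_repr z, ofInt_sum]
  simp_rw [ofInt_zsmul, ← toReal_apply, b.toReal.repr_sum_self]

end Module.Basis

section Convex

variable {E : Type*} [AddCommGroup E] [Module ℝ E] {P : Set E}

lemma Convex.add_smul_sub_add_smul_sub_mem (hP : Convex ℝ P) {v x y : E} (hv : v ∈ P)
    (hx : x ∈ P) (hy : y ∈ P) {a b : ℝ} (ha : 0 ≤ a) (hb : 0 ≤ b) (hab : a + b ≤ 1) :
    v + a • (x - v) + b • (y - v) ∈ P := by
  have := hP.sum_mem (t := Finset.univ) (w := ![1 - a - b, a, b]) (z := ![v, x, y])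
    (by simp [Fin.forall_fin_succ]; refine ⟨by linarith, ha, hb⟩)
    (by simp [Fin.sum_univ_three]; ring)
    (by simp [Fin.forall_fin_succ, hv, hx, hy])
  convert this using 1
  simp [Fin.sum_univ_three]
  module

/-- Near the midpoint `m` of the edge, the point `m + s • (m - p)` lies in the triangle spanned by
the vertex and its two edges, so `m` is interior to a segment from `p`; extremality of the edge
then puts `p` on the edge's line. -/
lemma Convex.basis_repr_sub_nonneg_of_isExtreme (hP : Convex ℝ P) (e : Module.Basis (Fin 2) ℝ E)
    {v : E} {c₀ c₁ : ℝ} (hc₀ : 0 < c₀) (hc₁ : 0 < c₁) (h₁ : v + c₁ • e 1 ∈ P)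
    (hedge : IsExtreme ℝ P (segment ℝ v (v + c₀ • e 0))) {p : E} (hp : p ∈ P) :
    0 ≤ e.repr (p - v) 1 := by
  have hv : v ∈ P := hedge.1 (left_mem_segment ℝ _ _)
  by_contra! hneg
  set α := e.repr (p - v) 0
  set β := e.repr (p - v) 1
  have hp' : p = v + α • e 0 + β • e 1 := by
    rw [add_assoc, ← Fin.sum_univ_two (f := fun i => e.repr (p - v) i • e i), e.sum_repr]
    abel
  set k₀ := 1 / 2 - α / c₀
  set k₁ := -β / c₁
  have hk₁ : 0 < k₁ := div_pos (by linarith) hc₁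
  set s := 1 / (2 * (1 + |k₀| + k₁))
  have hs : 0 < s := by positivity
  have hsk : s * (|k₀| + k₁) ≤ 1 / 2 := by
    rw [div_mul_eq_mul_div, div_le_iff₀ (by positivity)]; linarith
  set w₀ := v + c₀ • e 0
  set m := v + (1 / 2 : ℝ) • (w₀ - v)
  have hz : m + s • (m - p) ∈ P := by
    have := hP.add_smul_sub_add_smul_sub_mem hv (hedge.1 (right_mem_segment ℝ v w₀)) h₁
      (a := 1 / 2 + s * k₀) (b := s * k₁) (by nlinarith [neg_abs_le k₀]) (by positivity)
      (by nlinarith [le_abs_self k₀])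
    convert this using 1
    simp only [m, w₀, k₀, k₁, hp']
    match_scalars <;> field_simp
    all_goals ring
  have hm : m ∈ openSegment ℝ p (m + s • (m - p)) := by
    refine ⟨s / (1 + s), 1 / (1 + s), by positivity, by positivity, by field_simp; ring, ?_⟩
    match_scalars <;> field_simp
    all_goals ring
  have hmseg : m ∈ segment ℝ v w₀ :=
    (convex_segment v w₀).add_smul_sub_mem (left_mem_segment ℝ v w₀)
      (right_mem_segment ℝ v w₀) ⟨by norm_num, by norm_num⟩
  obtain ⟨a, b, -, -, hab, hpab⟩ := hedge.2 hp hz hmseg hm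
  obtain rfl : a = 1 - b := by linarith
  have : p - v = (b * c₀) • e 0 := by rw [← hpab]; module
  simp [β, this] at hneg

lemma Convex.basis_repr_sub_nonneg (hP : Convex ℝ P) (e : Module.Basis (Fin 2) ℝ E) {v : E}
    {c : Fin 2 → ℝ} (hc : ∀ i, 0 < c i) (hedge : ∀ i, IsExtreme ℝ P (segment ℝ v (v + c i • e i)))
    {p : E} (hp : p ∈ P) (i : Fin 2) : 0 ≤ e.repr (p - v) i := by
  have hw (i : Fin 2) : v + c i • e i ∈ P := (hedge i).1 (right_mem_segment ℝ _ _)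
  fin_cases i
  · simpa using hP.basis_repr_sub_nonneg_of_isExtreme (e.reindex (Equiv.swap 0 1)) (hc 1) (hc 0)
      (by simpa using hw 0) (by simpa using hedge 1) hp
  · exact hP.basis_repr_sub_nonneg_of_isExtreme e (hc 0) (hc 1) (hw 1) (hedge 0) hp

end Convex

lemma Finset.card_le_two_of_forall_not_lt_lt {α : Type*} [LinearOrder α] {S : Finset α}
    (h : ∀ x ∈ S, ∀ y ∈ S, ∀ z ∈ S, x < y → y < z → False) : S.card ≤ 2 := by
  by_contra! hS
  have hne : S.Nonempty := Finset.card_pos.mp (by omega)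
  obtain ⟨y, hy⟩ : ((S.erase (S.min' hne)).erase (S.max' hne)).Nonempty := by
    rw [← Finset.card_pos]
    have h₁ := Finset.pred_card_le_card_erase (s := S) (a := S.min' hne)
    have h₂ := Finset.pred_card_le_card_erase (s := S.erase (S.min' hne)) (a := S.max' hne)
    omega
  have hy₁ := Finset.mem_of_mem_erase hy
  have hy₂ : y ∈ S.erase (S.max' hne) :=
    Finset.mem_erase.mpr ⟨Finset.ne_of_mem_erase hy, Finset.mem_of_mem_erase hy₁⟩
  exact h _ (S.min'_mem hne) y (Finset.mem_of_mem_erase hy₁) _ (S.max'_mem hne)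
    (S.min'_lt_of_mem_erase_min' hne hy₁) (S.lt_max'_of_mem_erase_max' hne hy₂)

/-- A weak form of convex independence that makes sense in any abelian group, such as `ℤ²`. -/
def NoPointBetween {M : Type*} [AddCommGroup M] (T : Set M) : Prop :=
  ∀ p ∈ T, ∀ q ∈ T, ∀ r ∈ T, ∀ m n : ℤ, 0 < m → 0 < n → (m + n) • p = m • q + n • r → q = p

lemma noPointBetween_extremePoints {E : Type*} [AddCommGroup E] [Module ℝ E] (P : Set E) :
    NoPointBetween (extremePoints ℝ P) := by
  intro x hx y hy w hw m n hm hn h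
  have hmn : (0 : ℝ) < m + n := by exact_mod_cast add_pos hm hn
  refine hx.2 hy.1 hw.1 ⟨m / (m + n), n / (m + n), by positivity, by positivity, by field_simp, ?_⟩
  simp only [← Int.cast_smul_eq_zsmul ℝ, Int.cast_add] at h
  rw [div_eq_inv_mul, div_eq_inv_mul, mul_smul, mul_smul, ← smul_add, ← h, smul_smul,
    inv_mul_cancel₀ hmn.ne', one_smul]

namespace NoPointBetween

section Group

variable {M N : Type*} [AddCommGroup M] [AddCommGroup N] {S T : Set M}

lemma mono (hT : NoPointBetween T) (hST : S ⊆ T) : NoPointBetween S :=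
  fun p hp q hq r hr m n hm hn h => hT p (hST hp) q (hST hq) r (hST hr) m n hm hn h

lemma image {g : M →+ N} (hg : Function.Injective g) (hT : NoPointBetween T) :
    NoPointBetween (g '' T) := by
  rintro _ ⟨p, hp, rfl⟩ _ ⟨q, hq, rfl⟩ _ ⟨r, hr, rfl⟩ m n hm hn h
  rw [← map_zsmul, ← map_zsmul, ← map_zsmul, ← map_add] at h
  rw [hT p hp q hq r hr m n hm hn (hg h)]

lemma preimage {g : M →+ N} (hg : Function.Injective g) {U : Set N} (hU : NoPointBetween U) :
    NoPointBetween (g ⁻¹' U) := by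
  intro p hp q hq r hr m n hm hn h
  refine hg (hU _ hp _ hq _ hr m n hm hn ?_)
  rw [← map_zsmul, ← map_zsmul, ← map_zsmul, ← map_add, h]

lemma image_sub_const (hT : NoPointBetween T) (c : M) :
    NoPointBetween ((· - c) '' T) := by
  rintro _ ⟨p, hp, rfl⟩ _ ⟨q, hq, rfl⟩ _ ⟨r, hr, rfl⟩ m n hm hn h
  rw [hT p hp q hq r hr m n hm hn (by linear_combination (norm := module) h)]

end Group

variable {T : Finset (ℤ × ℤ)}

lemma eq_of_two_smul_eq_add (hT : NoPointBetween (T : Set (ℤ × ℤ))) {p q r : ℤ × ℤ} (hp : p ∈ T)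
    (hq : q ∈ T) (hr : r ∈ T) (h : (2 : ℤ) • p = q + r) : q = p :=
  hT p hp q hq r hr 1 1 one_pos one_pos (by simpa [one_add_one_eq_two] using h)

lemma card_filter_snd_eq_le_two (hT : NoPointBetween (T : Set (ℤ × ℤ))) (k : ℤ) :
    (T.filter (·.2 = k)).card ≤ 2 := by
  have hinj : Set.InjOn Prod.fst (T.filter (·.2 = k) : Set (ℤ × ℤ)) := fun p hp q hq h => by
    simp only [Finset.coe_filter, Set.mem_ofPred_eq] at hp hq
    exact Prod.ext h (hp.2.trans hq.2.symm)
  rw [← Finset.card_image_of_injOn hinj]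
  refine Finset.card_le_two_of_forall_not_lt_lt ?_
  simp only [Finset.mem_image, Finset.mem_filter]
  rintro _ ⟨⟨x, _⟩, ⟨hx, rfl⟩, rfl⟩ _ ⟨⟨y, _⟩, ⟨hy, rfl⟩, rfl⟩ _ ⟨⟨z, _⟩, ⟨hz, rfl⟩, rfl⟩ hxy hyz
  have := hT _ hy _ hx _ hz (z - y) (y - x) (by omega) (by omega)
    (by ext <;> simp <;> ring)
  simp at this
  omega

lemma card_le_four_of_zero_two_mem (hT : NoPointBetween (T : Set (ℤ × ℤ)))
    (hsub : ∀ p ∈ T, 0 ≤ p.1 ∧ 0 ≤ p.2 ∧ p.1 + p.2 ≤ 2) (h02 : (0, 2) ∈ T) : T.card ≤ 4 := by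
  set Δ : Finset (ℤ × ℤ) := {(0, 0), (0, 1), (1, 1), (2, 0), (1, 0), (0, 2)}
  have hΔ : T ⊆ Δ := by
    rintro ⟨x, y⟩ hp
    obtain ⟨hx, hy, hxy⟩ := hsub _ hp
    simp only [Δ, Finset.mem_insert, Finset.mem_singleton, Prod.mk.injEq]
    omega
  -- `(0, 1)` and `(1, 1)` are the midpoints of `(0, 2)` with `(0, 0)` and `(2, 0)`.
  have h₁ : (0, 0) ∉ T ∨ (0, 1) ∉ T := not_and_or.mp fun ⟨h00, h01⟩ =>
    absurd (hT.eq_of_two_smul_eq_add h01 h00 h02 rfl) (by decide)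
  have h₂ : (2, 0) ∉ T ∨ (1, 1) ∉ T := not_and_or.mp fun ⟨h20, h11⟩ =>
    absurd (hT.eq_of_two_smul_eq_add h11 h20 h02 rfl) (by decide)
  obtain ⟨x, hx, hxT⟩ : ∃ x ∈ ({(0, 0), (0, 1)} : Finset (ℤ × ℤ)), x ∉ T := by simpa using h₁
  obtain ⟨y, hy, hyT⟩ : ∃ y ∈ ({(2, 0), (1, 1)} : Finset (ℤ × ℤ)), y ∉ T := by simpa using h₂
  calc T.card ≤ ((Δ.erase x).erase y).card :=
        Finset.card_le_card fun p hp => by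
          simp only [Finset.mem_erase]
          exact ⟨fun h => hyT (h ▸ hp), fun h => hxT (h ▸ hp), hΔ hp⟩
    _ = 4 := by
      simp only [Finset.mem_insert, Finset.mem_singleton] at hx hy
      rcases hx with rfl | rfl <;> rcases hy with rfl | rfl <;> rfl

lemma card_le_four (hT : NoPointBetween (T : Set (ℤ × ℤ))) {a b : ℝ} (ha : 0 ≤ a) (hb : 0 ≤ b)
    (hab : 0 < a + b) (hnonneg : ∀ p ∈ T, 0 ≤ p.1 ∧ 0 ≤ p.2)
    (hle : ∀ p ∈ T, a * p.1 + b * p.2 ≤ a + b) : T.card ≤ 4 := by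
  wlog hba : a ≤ b generalizing T a b with H
  · have hT' : NoPointBetween (T.image Prod.swap : Set (ℤ × ℤ)) := by
      simpa using hT.image (g := (AddEquiv.prodComm : ℤ × ℤ ≃+ ℤ × ℤ).toAddMonoidHom)
        AddEquiv.prodComm.injective
    rw [← Finset.card_image_of_injective T Prod.swap_injective]
    refine H hT' hb ha (by linarith) ?_ ?_ (by linarith)
    · rw [Finset.forall_mem_image]
      exact fun p hp => (hnonneg p hp).symm
    · rw [Finset.forall_mem_image]
      exact fun p hp => by simpa [add_comm] using hle p hp
  have hb₀ : 0 < b := by linarith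
  have hrow : ∀ p ∈ T, p.2 ≤ 1 ∨ (p = (0, 2) ∧ a = b) := by
    rintro ⟨x, y⟩ hp
    obtain ⟨hx, hy⟩ := hnonneg _ hp
    have hxy := hle _ hp
    refine or_iff_not_imp_left.mpr fun hy₁ => ?_
    have hy₂ : (2 : ℝ) ≤ y := by exact_mod_cast (not_le.mp hy₁ : 1 < y)
    have hax : 0 ≤ a * x := mul_nonneg ha (by exact_mod_cast hx)
    have hab : a = b := by nlinarith
    subst hab
    have hx₀ : (x : ℝ) = 0 := by nlinarith
    have hy₀ : (y : ℝ) = 2 := by nlinarith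
    exact ⟨Prod.ext (by exact_mod_cast hx₀) (by exact_mod_cast hy₀), rfl⟩
  by_cases h : (0, 2) ∈ T ∧ a = b
  · obtain ⟨h02, rfl⟩ := h
    refine hT.card_le_four_of_zero_two_mem
      (fun p hp => ⟨(hnonneg p hp).1, (hnonneg p hp).2, ?_⟩) h02
    have : (p.1 + p.2 : ℝ) ≤ 2 := by nlinarith [hle p hp]
    exact_mod_cast this
  · have hsub : T ⊆ T.filter (·.2 = 0) ∪ T.filter (·.2 = 1) := fun p hp => by
      have := (hnonneg p hp).2
      have : p.2 ≤ 1 := (hrow p hp).resolve_right fun ⟨hp₀, hab⟩ => h ⟨hp₀ ▸ hp, hab⟩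
      simp only [Finset.mem_union, Finset.mem_filter, hp, true_and]
      omega
    calc T.card ≤ (T.filter (·.2 = 0) ∪ T.filter (·.2 = 1)).card := Finset.card_le_card hsub
      _ ≤ (T.filter (·.2 = 0)).card + (T.filter (·.2 = 1)).card := Finset.card_union_le _ _
      _ ≤ 4 := by
        linarith [hT.card_filter_snd_eq_le_two 0, hT.card_filter_snd_eq_le_two 1]

end NoPointBetween

section Supporting

variable {E : Type*} [TopologicalSpace E] [AddCommGroup E] [Module ℝ E] [IsTopologicalAddGroup E]
  [ContinuousSMul ℝ E] {P : Set E}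

lemma Convex.exists_supporting_line_of_notMem_interior (hP : Convex ℝ P)
    (hint : (interior P).Nonempty) (e : Module.Basis (Fin 2) ℝ E) {v : E} (h₀ : v + e 0 ∈ P)
    (h₁ : v + e 1 ∈ P) (hq : v + e 0 + e 1 ∉ interior P) :
    ∃ a b : ℝ, 0 ≤ a ∧ 0 ≤ b ∧ 0 < a + b ∧
      ∀ p ∈ P, a * e.repr (p - v) 0 + b * e.repr (p - v) 1 ≤ a + b := by
  obtain ⟨f, u, hf, hfP, hfq⟩ := geometric_hahn_banach_of_nonempty_interior hP
    (convex_singleton _) (disjoint_singleton_right.mpr hq) hint (singleton_nonempty _)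
  replace hfP : ∀ p ∈ P, f p ≤ f (v + e 0 + e 1) := fun p hp => (hfP p hp).trans (hfq _ rfl)
  have hf_sub (p : E) : f p - f v = e.repr (p - v) 0 * f (e 0) + e.repr (p - v) 1 * f (e 1) := by
    rw [← map_sub, ← e.sum_repr (p - v)]
    simp [Fin.sum_univ_two]
  have ha : 0 ≤ f (e 0) := by simpa using hfP _ h₁
  have hb : 0 ≤ f (e 1) := by simpa using hfP _ h₀
  refine ⟨f (e 0), f (e 1), ha, hb, ?_, fun p hp => ?_⟩
  · by_contra! hab
    refine hf (ContinuousLinearMap.coe_injective (e.ext fun i => ?_))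
    fin_cases i <;> simp <;> linarith
  · have := hfP p hp
    simp only [map_add] at this
    linarith [hf_sub p]

end Supporting

namespace IsLatticePolytope

variable {P : Set (Fin 2 → ℝ)}

lemma convex (hP : IsLatticePolytope P) : Convex ℝ P := by
  obtain ⟨V, rfl⟩ := hP
  exact convex_convexHull ℝ _

lemma exists_ofInt_eq_of_mem_extremePoints (hP : IsLatticePolytope P) {x : Fin 2 → ℝ}
    (hx : x ∈ extremePoints ℝ P) : ∃ z, ofInt z = x := by
  obtain ⟨V, rfl⟩ := hP
  obtain ⟨z, -, hz⟩ := extremePoints_convexHull_subset hx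
  exact ⟨z, hz⟩

lemma ncard_extremePoints_le_four_of_forall_repr_le (hP : IsLatticePolytope P)
    (b : Module.Basis (Fin 2) ℤ (Fin 2 → ℤ)) (z₀ : Fin 2 → ℤ) {a a' : ℝ} (ha : 0 ≤ a)
    (ha' : 0 ≤ a') (haa : 0 < a + a')
    (hnonneg : ∀ p ∈ P, ∀ i, 0 ≤ b.toReal.repr (p - ofInt z₀) i)
    (hle : ∀ p ∈ P, a * b.toReal.repr (p - ofInt z₀) 0 + a' * b.toReal.repr (p - ofInt z₀) 1 ≤
      a + a') :
    (extremePoints ℝ P).ncard ≤ 4 := by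
  classical
  obtain ⟨V, rfl⟩ := hP
  set P := convexHull ℝ (ofInt '' (V : Set (Fin 2 → ℤ)))
  set W := V.filter (fun z => ofInt z ∈ extremePoints ℝ P)
  have hW : extremePoints ℝ P = ofInt '' W := by
    ext x
    refine ⟨fun hx => ?_, fun ⟨z, hz, hzx⟩ => hzx ▸ (Finset.mem_filter.mp hz).2⟩
    obtain ⟨z, hz, rfl⟩ := extremePoints_convexHull_subset hx
    exact ⟨z, Finset.mem_filter.mpr ⟨hz, hx⟩, rfl⟩
  have hWP : ∀ z ∈ W, ofInt z ∈ P := fun z hz => extremePoints_subset (Finset.mem_filter.mp hz).2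
  set φ := b.equivFun.trans (LinearEquiv.finTwoArrow ℤ ℤ)
  set κ : (Fin 2 → ℤ) → ℤ × ℤ := fun z => φ (z - z₀)
  have hκ (z : Fin 2 → ℤ) : b.toReal.repr (ofInt z - ofInt z₀) 0 = (κ z).1 ∧
      b.toReal.repr (ofInt z - ofInt z₀) 1 = (κ z).2 := by
    rw [← ofInt_sub, b.toReal_repr_ofInt, b.toReal_repr_ofInt]
    simp [κ, φ]
  have hT : NoPointBetween ((W.image κ : Finset (ℤ × ℤ)) : Set (ℤ × ℤ)) := by
    have hW' : NoPointBetween (W : Set (Fin 2 → ℤ)) :=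
      ((noPointBetween_extremePoints P).preimage (g := AddMonoidHom.mk' ofInt ofInt_add)
        ofInt_injective).mono fun z hz => (Finset.mem_filter.mp hz).2
    have := (hW'.image_sub_const z₀).image (g := φ.toAddMonoidHom) φ.injective
    rwa [Set.image_image, ← Finset.coe_image] at this
  rw [hW, ncard_image_of_injective _ ofInt_injective, ncard_coe_finset,
    ← Finset.card_image_of_injective W (φ.injective.comp (sub_left_injective (b := z₀)))]
  refine hT.card_le_four ha ha' haa ?_ ?_ <;> rw [Finset.forall_mem_image] <;> intro z hz
  · have h₀ := hnonneg _ (hWP z hz) 0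
    have h₁ := hnonneg _ (hWP z hz) 1
    rw [(hκ z).1] at h₀
    rw [(hκ z).2] at h₁
    exact ⟨by exact_mod_cast h₀, by exact_mod_cast h₁⟩
  · simpa only [(hκ z).1, (hκ z).2] using hle _ (hWP z hz)

lemma ncard_extremePoints_le_four_of_notMem_interior (hP : IsLatticePolytope P)
    (hint : (interior P).Nonempty) {z₀ : Fin 2 → ℤ} (b : Module.Basis (Fin 2) ℤ (Fin 2 → ℤ))
    (hb : ∀ i, ∃ w, Adjacent P (ofInt z₀) w ∧ ∃ c : ℤ, 0 < c ∧ w = ofInt z₀ + c • ofInt (b i))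
    (hq : ofInt (z₀ + b 0 + b 1) ∉ interior P) :
    (extremePoints ℝ P).ncard ≤ 4 := by
  have hedge (i : Fin 2) : ∃ c : ℝ, 1 ≤ c ∧
      IsExtreme ℝ P (segment ℝ (ofInt z₀) (ofInt z₀ + c • b.toReal i)) := by
    obtain ⟨w, hw, c, hc, rfl⟩ := hb i
    exact ⟨c, by exact_mod_cast hc, by simpa [Int.cast_smul_eq_zsmul] using hw.2.2.2⟩
  choose c hc hedge using hedge
  have hunit (i : Fin 2) : ofInt z₀ + b.toReal i ∈ P := by
    have := hP.convex.add_smul_sub_mem ((hedge i).1 (left_mem_segment ℝ _ _))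
      ((hedge i).1 (right_mem_segment ℝ _ _)) ⟨inv_nonneg.mpr (zero_le_one.trans (hc i)),
        inv_le_one_of_one_le₀ (hc i)⟩
    rwa [add_sub_cancel_left, smul_smul, inv_mul_cancel₀ (one_pos.trans_le (hc i)).ne',
      one_smul] at this
  obtain ⟨a, a', ha, ha', haa, hle⟩ := hP.convex.exists_supporting_line_of_notMem_interior hint
    b.toReal (hunit 0) (hunit 1) (by simpa [add_assoc] using hq)
  exact hP.ncard_extremePoints_le_four_of_forall_repr_le b z₀ ha ha' haa
    (fun p hp => hP.convex.basis_repr_sub_nonneg b.toReal (fun i => one_pos.trans_le (hc i))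
      hedge hp) hle

end IsLatticePolytope

/-- Every smooth lattice polygon with exactly 5 or exactly 6 vertices has an interior
lattice point. -/
theorem smooth_pentagon_hexagon_interior_point (P : Set (Fin 2 → ℝ))
    (hP : IsSmoothPolytope P)
    (hv : (Set.extremePoints ℝ P).ncard = 5 ∨ (Set.extremePoints ℝ P).ncard = 6) :
    ∃ x ∈ interior P, ∃ z : Fin 2 → ℤ, x = ofInt z := by
  obtain ⟨hlat, hspan, -, hsmooth⟩ := hP
  obtain ⟨_, hvE⟩ : (extremePoints ℝ P).Nonempty := nonempty_of_ncard_ne_zero (by omega)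
  obtain ⟨z₀, rfl⟩ := hlat.exists_ofInt_eq_of_mem_extremePoints hvE
  obtain ⟨b, -, hb⟩ := hsmooth _ hvE
  have hint := hlat.convex.interior_nonempty_iff_affineSpan_eq_top.mpr hspan
  by_contra! hfree
  have := hlat.ncard_extremePoints_le_four_of_notMem_interior hint b hb
    fun h => hfree _ h _ rfl
  omega
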